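/- arXiv:1401.4974 — 6 statements merged into one kernel-verified Lean document; each statement's English description precedes it below -/
import Mathlib

section
/- Let (ñ_α^β)_{α,β≥1} be natural numbers such that for each α only finitely many β satisfy ñ_α^β ≠ 0, and only finitely many α have some ñ_α^β ≠ 0. For b, v ≥ 1 define n_b^v := Σ over finitely supported families (j_α^β)_{α,β≥1} of natural numbers with Σ_{α,β} α·j_α^β = b and Σ_{α,β} β·j_α^β = v, of Π_{α,β} (−(−1)^β)^{j_α^β} · binom(−(−1)^β·ñ_α^β, j_α^β); and set χ̃_α := Σ_{β≥1} (−1)^β·ñ_α^β ∈ ℤ. Then for every b ≥ 1: Σ_{v≥1} (−1)^v·n_b^v = Σ over finitely supported families (i_α)_{α≥1} of natural numbers with Σ_α α·i_α = b of Π_{α≥1} (−1)^{i_α}·binom(−χ̃_α, i_α). (All sums appearing are finite.) -/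
/-!
Both sides are the coefficient of `t ^ b` in one power series. The sign `(-1) ^ v` turns each
factor `(-(-1) ^ β) ^ j` into `(-1) ^ j`, and `(-1) ^ n * binom(x, n)` is the coefficient of
`t ^ n` in `(1 - t) ^ x`; so the left side is the coefficient of `t ^ b` in
`∏_{α,β} (1 - t ^ α) ^ (-(-1) ^ β * ñ_α^β)`. Collecting the factors with the same `α` by
`(1 - u) ^ x * (1 - u) ^ y = (1 - u) ^ (x + y)` gives `∏_α (1 - t ^ α) ^ (-χ̃_α)`, whose
coefficient of `t ^ b` is the right side.
-/

open Finset PowerSeries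

namespace Finset

variable {ι : Type*}

/-- The bound `n + 1` on the values only makes this a finset; it is automatic when `w` does not
vanish on `s` (`mem_weightedFinsuppAntidiag`). -/
noncomputable def weightedFinsuppAntidiag (s : Finset ι) (w : ι → ℕ) (n : ℕ) :
    Finset (ι →₀ ℕ) :=
  {j ∈ s.finsupp fun _ => range (n + 1) | j.sum (fun i k => w i * k) = n}

theorem mem_weightedFinsuppAntidiag {s : Finset ι} {w : ι → ℕ} (hw : ∀ i ∈ s, w i ≠ 0)
    {n : ℕ} {j : ι →₀ ℕ} :
    j ∈ s.weightedFinsuppAntidiag w n ↔ j.support ⊆ s ∧ j.sum (fun i k => w i * k) = n := by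
  simp only [weightedFinsuppAntidiag, mem_filter, mem_finsupp_iff, mem_range,
    Nat.lt_succ_iff]
  refine ⟨fun ⟨⟨hs, _⟩, hn⟩ => ⟨hs, hn⟩, fun ⟨hs, hn⟩ => ⟨⟨hs, fun i hi => ?_⟩, hn⟩⟩
  by_cases hji : j i = 0
  · simp [hji]
  calc j i ≤ w i * j i := Nat.le_mul_of_pos_left _ (Nat.pos_of_ne_zero (hw i hi))
    _ ≤ n := hn ▸ single_le_sum (f := fun i => w i * j i) (by simp)
        (Finsupp.mem_support_iff.2 hji)

theorem exists_mem_weightedFinsuppAntidiag_mul_eq [DecidableEq ι] {s : Finset ι} {w : ι → ℕ}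
    {n : ℕ} {l : ι →₀ ℕ} (hl : l ∈ s.finsuppAntidiag n) (hdvd : ∀ i ∈ s, w i ∣ l i) :
    ∃ j ∈ s.weightedFinsuppAntidiag w n, ∀ i, w i * j i = l i := by
  obtain ⟨hln, hls⟩ := mem_finsuppAntidiag.1 hl
  let j := Finsupp.onFinset l.support (fun i => l i / w i)
    fun i hi => Finsupp.mem_support_iff.2 fun h => hi (by simp [h])
  have hjs : j.support ⊆ s := Finsupp.support_onFinset_subset.trans hls
  have hjl : ∀ i, w i * j i = l i := fun i => by
    by_cases hi : i ∈ s
    · exact Nat.mul_div_cancel' (hdvd i hi)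
    · simp [j, Finsupp.notMem_support_iff.1 (mt (@hls i) hi)]
  refine ⟨j, mem_filter.2 ⟨mem_finsupp_iff.2 ⟨hjs, fun i hi => ?_⟩, ?_⟩, hjl⟩
  · rw [mem_range, Nat.lt_succ_iff]
    calc j i = l i / w i := Finsupp.onFinset_apply
      _ ≤ l i := Nat.div_le_self _ _
      _ ≤ n := hln ▸ single_le_sum (fun _ _ => Nat.zero_le _) hi
  · rw [Finsupp.sum_of_support_subset j hjs _ (by simp), ← hln]
    exact sum_congr rfl fun i _ => hjl i

end Finset

namespace PowerSeries

variable {R : Type*} [CommRing R]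

theorem coeff_prod_subst_X_pow {ι : Type*} [DecidableEq ι] {s : Finset ι} {w : ι → ℕ}
    (hw : ∀ i ∈ s, w i ≠ 0) (φ : ι → R⟦X⟧) (n : ℕ) :
    coeff n (∏ i ∈ s, subst (X ^ w i : R⟦X⟧) (φ i)) =
      ∑ j ∈ s.weightedFinsuppAntidiag w n, ∏ i ∈ s, coeff (j i) (φ i) := by
  rw [coeff_prod]
  symm
  refine sum_of_injOn
    (fun j => Finsupp.onFinset j.support (fun i => w i * j i)
      fun i hi => Finsupp.mem_support_iff.2 (right_ne_zero_of_mul hi)) ?_ ?_ ?_ ?_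
  · intro j hj k hk hjk
    have hjs := ((mem_weightedFinsuppAntidiag hw).1 hj).1
    have hks := ((mem_weightedFinsuppAntidiag hw).1 hk).1
    ext i
    by_cases hi : i ∈ s
    · simpa [hw i hi] using DFunLike.congr_fun hjk i
    · rw [Finsupp.notMem_support_iff.1 (mt (@hjs i) hi),
        Finsupp.notMem_support_iff.1 (mt (@hks i) hi)]
  · intro j hj
    obtain ⟨hjs, hjn⟩ := (mem_weightedFinsuppAntidiag hw).1 hj
    refine mem_finsuppAntidiag.2 ⟨?_, (Finsupp.support_onFinset_subset).trans hjs⟩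
    rw [← hjn, Finsupp.sum_of_support_subset j hjs _ (by simp)]
    exact sum_congr rfl fun i _ => Finsupp.onFinset_apply
  · intro l hl hnot
    by_contra hprod
    have hdvd : ∀ i ∈ s, w i ∣ l i := fun i hi => by_contra fun h =>
      hprod (prod_eq_zero hi (by rw [coeff_subst_X_pow (hw i hi), if_neg h]))
    obtain ⟨j, hj, hjl⟩ := exists_mem_weightedFinsuppAntidiag_mul_eq hl hdvd
    exact hnot ⟨j, hj, Finsupp.ext fun i => Finsupp.onFinset_apply.trans (hjl i)⟩
  · intro j hj
    refine prod_congr rfl fun i hi => ?_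
    rw [coeff_subst_X_pow (hw i hi), Finsupp.onFinset_apply, if_pos (dvd_mul_right _ _),
      Nat.mul_div_cancel_left _ (Nat.pos_of_ne_zero (hw i hi)), Algebra.algebraMap_self,
      RingHom.id_apply]

theorem binomialSeries_sum {ι : Type*} [BinomialRing R] (s : Finset ι) (x : ι → R) :
    binomialSeries R (∑ i ∈ s, x i) = ∏ i ∈ s, binomialSeries R (x i) := by
  induction s using Finset.cons_induction with
  | empty => simp
  | cons a s ha ih => rw [sum_cons, prod_cons, binomialSeries_add, ih]

end PowerSeries

theorem sum_weightedFinsuppAntidiag_prod_choose {R ι κ : Type*} [CommRing R] [BinomialRing R]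
    [DecidableEq ι] [DecidableEq κ] {A : Finset ι} (B : Finset κ) {w : ι → ℕ}
    (hw : ∀ i ∈ A, w i ≠ 0) (a : ι → R) (x : ι × κ → R) (n : ℕ) :
    ∑ j ∈ (A ×ˢ B).weightedFinsuppAntidiag (fun p => w p.1) n,
        ∏ p ∈ A ×ˢ B, a p.1 ^ j p * Ring.choose (x p) (j p) =
      ∑ i ∈ A.weightedFinsuppAntidiag w n,
        ∏ α ∈ A, a α ^ i α * Ring.choose (∑ β ∈ B, x (α, β)) (i α) := by
  have hcoeff : ∀ (c r : R) (k : ℕ),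
      coeff k (rescale c (binomialSeries R r)) = c ^ k * Ring.choose r k := by
    simp [coeff_rescale]
  have hfiber : ∀ α ∈ A,
      ∏ β ∈ B, subst (X ^ w α : R⟦X⟧) (rescale (a α) (binomialSeries R (x (α, β)))) =
        subst (X ^ w α : R⟦X⟧) (rescale (a α) (binomialSeries R (∑ β ∈ B, x (α, β)))) :=
    fun α hα => by simp only [← expand_apply _ (hw α hα), binomialSeries_sum, map_prod]
  simp only [← hcoeff]
  rw [← coeff_prod_subst_X_pow (fun p hp => hw p.1 (mem_product.1 hp).1),
    ← coeff_prod_subst_X_pow hw, prod_product, prod_congr rfl hfiber]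

theorem finsum_mem_sum_filter {α β M : Type*} [AddCommMonoid M] [DecidableEq α] (s : Finset β)
    (g : β → α) (f : β → M) {t : Set α} (h : ∀ y ∈ s, g y ∈ t) :
    ∑ᶠ x ∈ t, ∑ y ∈ s with g y = x, f y = ∑ y ∈ s, f y := by
  have hsupp := support_of_fiberwise_sum_subset_image s f g
  have himage : (↑(s.image g) : Set α) ⊆ t := by
    rw [coe_image, Set.image_subset_iff]
    exact h
  rw [finsum_mem_eq_sum_of_inter_support_eq _ (t := s.image g),
    sum_fiberwise_of_maps_to fun y hy => mem_image_of_mem g hy]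
  rw [Set.inter_eq_right.2 hsupp, Set.inter_eq_right.2 (hsupp.trans himage)]

theorem support_subset_of_prod_mul_choose_ne_zero {R ι : Type*} [CommRing R] [BinomialRing R]
    {s : Finset ι} {x : ι → R} (hx : ∀ i ∉ s, x i = 0) {j : ι →₀ ℕ} (g : ι → R)
    (h : ∏ i ∈ j.support, g i * Ring.choose (x i) (j i) ≠ 0) : j.support ⊆ s := by
  intro i hi
  by_contra his
  refine h (prod_eq_zero hi ?_)
  rw [hx i his, Ring.choose_zero_pos R (Nat.pos_of_ne_zero (Finsupp.mem_support_iff.1 hi)),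
    mul_zero]

theorem neg_one_pow_sum_mul_prod {R ι : Type*} [CommRing R] (d : ι → ℕ) (j : ι →₀ ℕ)
    (c : ι → R) :
    (-1 : R) ^ j.sum (fun i k => d i * k) * ∏ i ∈ j.support, (-(-1 : R) ^ d i) ^ j i * c i =
      ∏ i ∈ j.support, (-1 : R) ^ j i * c i := by
  rw [Finsupp.sum, ← prod_pow_eq_pow_sum, ← prod_mul_distrib]
  refine prod_congr rfl fun i _ => ?_
  have hsq : ((-1 : R) ^ (d i * j i)) ^ 2 = 1 := by
    rw [← pow_mul, pow_mul', neg_one_sq, one_pow]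
  rw [neg_pow ((-1 : R) ^ d i), ← pow_mul]
  linear_combination ((-1 : R) ^ j i * c i) * hsq

section Box

variable {A B : Finset ℕ} {x : ℕ × ℕ → ℤ}

theorem finsum_eq_sum_filter_weightedFinsuppAntidiag (hA : 0 ∉ A) (hB : 0 ∉ B)
    (hx : ∀ p ∉ A ×ˢ B, x p = 0) (b v : ℕ) :
    ∑ᶠ j : {j : ℕ × ℕ →₀ ℕ // (∀ β, j (0, β) = 0) ∧ (∀ α, j (α, 0) = 0) ∧
        j.sum (fun p k => p.1 * k) = b ∧ j.sum (fun p k => p.2 * k) = v},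
      ∏ p ∈ (j : ℕ × ℕ →₀ ℕ).support,
        (-(-1 : ℤ) ^ p.2) ^ (j : ℕ × ℕ →₀ ℕ) p * Ring.choose (x p) ((j : ℕ × ℕ →₀ ℕ) p) =
    ∑ j ∈ (A ×ˢ B).weightedFinsuppAntidiag (fun p => p.1) b with
        j.sum (fun p k => p.2 * k) = v,
      ∏ p ∈ j.support, (-(-1 : ℤ) ^ p.2) ^ j p * Ring.choose (x p) (j p) := by
  refine (finsum_subtype_eq_finsum_cond (f := fun j : ℕ × ℕ →₀ ℕ =>
    ∏ p ∈ j.support, (-(-1 : ℤ) ^ p.2) ^ j p * Ring.choose (x p) (j p)) _).trans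
    (finsum_cond_eq_sum_of_cond_iff _ fun {j} hj => ?_)
  have hs : j.support ⊆ A ×ˢ B := support_subset_of_prod_mul_choose_ne_zero hx _ hj
  have h0 : (∀ β, j (0, β) = 0) ∧ ∀ α, j (α, 0) = 0 :=
    ⟨fun β => Finsupp.notMem_support_iff.1 fun h => hA (mem_product.1 (hs h)).1,
      fun α => Finsupp.notMem_support_iff.1 fun h => hB (mem_product.1 (hs h)).2⟩
  rw [mem_filter, mem_weightedFinsuppAntidiag
    (fun p hp => ne_of_mem_of_not_mem (mem_product.1 hp).1 hA)]
  tauto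

theorem sum_snd_ne_zero_of_mem_weightedFinsuppAntidiag (hA : 0 ∉ A) (hB : 0 ∉ B) {b : ℕ}
    (hb : b ≠ 0) {j : ℕ × ℕ →₀ ℕ}
    (hj : j ∈ (A ×ˢ B).weightedFinsuppAntidiag (fun p => p.1) b) :
    j.sum (fun p k => p.2 * k) ≠ 0 := by
  obtain ⟨hs, hjb⟩ := (mem_weightedFinsuppAntidiag
    fun p hp => ne_of_mem_of_not_mem (mem_product.1 hp).1 hA).1 hj
  obtain ⟨p, hp, -⟩ := exists_ne_zero_of_sum_ne_zero (hjb ▸ hb : j.sum _ ≠ 0)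
  have hpj : p.2 * j p ≠ 0 :=
    mul_ne_zero (ne_of_mem_of_not_mem (mem_product.1 (hs hp)).2 hB)
      (Finsupp.mem_support_iff.1 hp)
  exact fun h => hpj (sum_eq_zero_iff.1 h p hp)

theorem finsum_neg_one_pow_mul_finsum_eq_sum (hA : 0 ∉ A) (hB : 0 ∉ B)
    (hx : ∀ p ∉ A ×ˢ B, x p = 0) {b : ℕ} (hb : b ≠ 0) :
    ∑ᶠ v ∈ Set.Ici 1, (-1 : ℤ) ^ v *
      ∑ᶠ j : {j : ℕ × ℕ →₀ ℕ // (∀ β, j (0, β) = 0) ∧ (∀ α, j (α, 0) = 0) ∧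
          j.sum (fun p k => p.1 * k) = b ∧ j.sum (fun p k => p.2 * k) = v},
        ∏ p ∈ (j : ℕ × ℕ →₀ ℕ).support,
          (-(-1 : ℤ) ^ p.2) ^ (j : ℕ × ℕ →₀ ℕ) p * Ring.choose (x p) ((j : ℕ × ℕ →₀ ℕ) p) =
    ∑ j ∈ (A ×ˢ B).weightedFinsuppAntidiag (fun p => p.1) b,
      ∏ p ∈ A ×ˢ B, (-1 : ℤ) ^ j p * Ring.choose (x p) (j p) := by
  have hw : ∀ p ∈ A ×ˢ B, p.1 ≠ 0 := fun p hp => ne_of_mem_of_not_mem (mem_product.1 hp).1 hA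
  calc _ = ∑ᶠ v ∈ Set.Ici 1, ∑ j ∈ (A ×ˢ B).weightedFinsuppAntidiag (fun p => p.1) b with
            j.sum (fun p k => p.2 * k) = v, (-1 : ℤ) ^ j.sum (fun p k => p.2 * k) *
          ∏ p ∈ j.support, (-(-1 : ℤ) ^ p.2) ^ j p * Ring.choose (x p) (j p) := by
        refine finsum_mem_congr rfl fun v _ => ?_
        rw [finsum_eq_sum_filter_weightedFinsuppAntidiag hA hB hx, mul_sum]
        exact sum_congr rfl fun j hj => by rw [(mem_filter.1 hj).2]
    _ = ∑ j ∈ (A ×ˢ B).weightedFinsuppAntidiag (fun p => p.1) b,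
          ∏ p ∈ j.support, (-1 : ℤ) ^ j p * Ring.choose (x p) (j p) := by
        rw [finsum_mem_sum_filter _ _ _ fun j hj => Set.mem_Ici.2 <|
          Nat.one_le_iff_ne_zero.2 (sum_snd_ne_zero_of_mem_weightedFinsuppAntidiag hA hB hb hj)]
        exact sum_congr rfl fun j _ => neg_one_pow_sum_mul_prod Prod.snd j _
    _ = _ := sum_congr rfl fun j hj => Finsupp.prod_of_support_subset j
          ((mem_weightedFinsuppAntidiag hw).1 hj).1
          (fun p k => (-1 : ℤ) ^ k * Ring.choose (x p) k) fun p _ => by simp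

end Box

theorem finsum_subtype_prod_choose_eq_sum {A : Finset ℕ} (hA : 0 ∉ A) {y : ℕ → ℤ}
    (hy : ∀ α ∉ A, y α = 0) (b : ℕ) :
    ∑ᶠ i : {i : ℕ →₀ ℕ // i 0 = 0 ∧ i.sum (fun α k => α * k) = b},
      ∏ α ∈ (i : ℕ →₀ ℕ).support,
        (-1 : ℤ) ^ (i : ℕ →₀ ℕ) α * Ring.choose (y α) ((i : ℕ →₀ ℕ) α) =
    ∑ i ∈ A.weightedFinsuppAntidiag (fun α => α) b,
      ∏ α ∈ A, (-1 : ℤ) ^ i α * Ring.choose (y α) (i α) := by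
  have hw : ∀ α ∈ A, α ≠ 0 := fun α hα => ne_of_mem_of_not_mem hα hA
  refine (finsum_subtype_eq_finsum_cond (f := fun i : ℕ →₀ ℕ =>
    ∏ α ∈ i.support, (-1 : ℤ) ^ i α * Ring.choose (y α) (i α)) _).trans
    ((finsum_cond_eq_sum_of_cond_iff _ fun {i} hi => ?_).trans
      (sum_congr rfl fun i hi => Finsupp.prod_of_support_subset i
        ((mem_weightedFinsuppAntidiag hw).1 hi).1
        (fun α k => (-1 : ℤ) ^ k * Ring.choose (y α) k) fun α _ => by simp))
  have hs : i.support ⊆ A := support_subset_of_prod_mul_choose_ne_zero hy _ hi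
  rw [mem_weightedFinsuppAntidiag hw]
  exact ⟨fun h => ⟨hs, h.2⟩,
    fun h => ⟨Finsupp.notMem_support_iff.1 fun h0 => hA (hs h0), h.2⟩⟩

theorem finsum_mem_Ici_one_eq_sum {M : Type*} [AddCommMonoid M] {B : Finset ℕ} (hB : 0 ∉ B)
    {f : ℕ → M} (hf : ∀ β ∉ B, f β = 0) : ∑ᶠ β ∈ Set.Ici 1, f β = ∑ β ∈ B, f β := by
  have hsupp : Function.support f ⊆ B := fun β hβ => by_contra fun h => hβ (hf β h)
  refine finsum_mem_eq_sum_of_inter_support_eq _ ?_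
  rw [Set.inter_eq_right.2 hsupp, Set.inter_eq_right.2 (hsupp.trans fun β hβ => ?_)]
  exact Nat.one_le_iff_ne_zero.2 (ne_of_mem_of_not_mem hβ hB)

/-- Let `(ñ_α^β)_{α,β ≥ 1}` be natural numbers, finitely supported
(encoded by a finsupp `N` on `ℕ × ℕ` vanishing when a coordinate is `0`).  For `b, v ≥ 1`,
`n_b^v` is the (finite) sum over finitely supported families `(j_α^β)_{α,β ≥ 1}` with
`∑ α·j_α^β = b` and `∑ β·j_α^β = v` of `∏ (-(-1)^β)^(j_α^β) · binom (-(-1)^β·ñ_α^β) (j_α^β)`,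
and `χ̃_α := ∑_{β ≥ 1} (-1)^β·ñ_α^β`.  Then for every `b ≥ 1`,
`∑_{v ≥ 1} (-1)^v·n_b^v = ∑_{(i_α), ∑ α·i_α = b} ∏_α (-1)^(i_α)·binom (-χ̃_α) (i_α)`. -/
theorem stmt_1 (N : ℕ × ℕ →₀ ℕ) (hN1 : ∀ β, N (0, β) = 0) (hN2 : ∀ α, N (α, 0) = 0)
    (b : ℕ) (hb : 1 ≤ b) :
    (∑ᶠ v ∈ Set.Ici 1, ((-1 : ℤ) ^ v *
      ∑ᶠ j : {j : ℕ × ℕ →₀ ℕ // (∀ β, j (0, β) = 0) ∧ (∀ α, j (α, 0) = 0) ∧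
          (j : ℕ × ℕ →₀ ℕ).sum (fun p k => p.1 * k) = b ∧
          (j : ℕ × ℕ →₀ ℕ).sum (fun p k => p.2 * k) = v},
        ∏ p ∈ (j : ℕ × ℕ →₀ ℕ).support,
          ((-(-1 : ℤ) ^ p.2) ^ ((j : ℕ × ℕ →₀ ℕ) p) *
            Ring.choose (-(-1 : ℤ) ^ p.2 * (N p : ℤ)) ((j : ℕ × ℕ →₀ ℕ) p)))) =
    ∑ᶠ i : {i : ℕ →₀ ℕ // (i : ℕ →₀ ℕ) 0 = 0 ∧
        (i : ℕ →₀ ℕ).sum (fun α k => α * k) = b},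
      ∏ α ∈ (i : ℕ →₀ ℕ).support,
        ((-1 : ℤ) ^ ((i : ℕ →₀ ℕ) α) *
          Ring.choose (-(∑ᶠ β ∈ Set.Ici 1, (-1 : ℤ) ^ β * (N (α, β) : ℤ)))
            ((i : ℕ →₀ ℕ) α)) := by
  set A := N.support.image Prod.fst
  set B := N.support.image Prod.snd
  have hA : 0 ∉ A := by simp [A, hN1]
  have hB : 0 ∉ B := by simp [B, hN2]
  have hN : ∀ p ∉ A ×ˢ B, N p = 0 := fun p hp => Finsupp.notMem_support_iff.1 fun h =>
    hp (mem_product.2 ⟨mem_image_of_mem _ h, mem_image_of_mem _ h⟩)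
  have hχ : ∀ α, -(∑ᶠ β ∈ Set.Ici 1, (-1 : ℤ) ^ β * (N (α, β) : ℤ)) =
      ∑ β ∈ B, -(-1 : ℤ) ^ β * (N (α, β) : ℤ) := fun α => by
    rw [finsum_mem_Ici_one_eq_sum hB fun β hβ => ?_, ← sum_neg_distrib]
    · simp only [neg_mul]
    · simp [hN (α, β) fun h => hβ (mem_product.1 h).2]
  rw [finsum_neg_one_pow_mul_finsum_eq_sum hA hB (fun p hp => by simp [hN p hp])
      (Nat.one_le_iff_ne_zero.1 hb),
    sum_weightedFinsuppAntidiag_prod_choose B (w := fun α => α)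
      (fun α hα => ne_of_mem_of_not_mem hα hA) (fun _ => -1),
    finsum_subtype_prod_choose_eq_sum hA (fun α hα => ?_)]
  · simp only [hχ]
  · rw [hχ]
    exact sum_eq_zero fun β _ => by simp [hN (α, β) fun h => hα (mem_product.1 h).1]
end

section
/- The number of even orbits of G on X, multiplied by the order |G|, equals Σ_{g ∈ G} Σ_{x ∈ X, g·x = x} ε(g,x), the sum being taken in ℤ (with ε valued in {1, −1} ⊆ ℤ). -/
/-!
For fixed `x`, the cocycle identity makes `g ↦ ε g x` a homomorphism from the stabilizer of `x`
to `{1, -1}`, so its sum is `|Stab x|` if `x` is even (that is, `ε` is trivial on `Stab x`) and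
`0` otherwise. Evenness is constant along orbits, because `ε (h k h⁻¹) (h • x) = ε k x` for `k`
fixing `x`, and the orders of the stabilizers of the points of an orbit add up to `|G|`; hence
every even orbit contributes `|G|` to the double sum and every other orbit contributes `0`.
-/

open MulAction

namespace MulAction

variable {G X : Type*} [Group G] [MulAction G X]

theorem sum_card_stabilizer_orbit [Finite G] (ω : orbitRel.Quotient G X) [Fintype ω.orbit] :
    ∑ x : ω.orbit, Nat.card (stabilizer G (x : X)) = Nat.card G := by
  have hω : ω.orbit = orbit G ω.out := orbitRel.Quotient.orbit_eq_orbit_out ω Quotient.out_eq'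
  have hcard (x : ω.orbit) : Nat.card (stabilizer G (x : X)) = Nat.card (stabilizer G ω.out) :=
    Nat.card_congr (stabilizerEquivStabilizerOfOrbitRel (hω.subset x.2)).toEquiv
  rw [Fintype.sum_congr _ _ hcard, Finset.sum_const, Finset.card_univ, smul_eq_mul,
    ← Nat.card_eq_fintype_card, hω, Nat.card_coe_set_eq, ← index_stabilizer, mul_comm,
    Subgroup.card_mul_index]

theorem sum_card_stabilizer_smul [Finite G] [Fintype X] [Fintype (orbitRel.Quotient G X)]
    {M : Type*} [AddCommMonoid M] (f : orbitRel.Quotient G X → M) :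
    ∑ x : X, Nat.card (stabilizer G x) • f (Quotient.mk'' x) = Nat.card G • ∑ ω, f ω := by
  classical
  calc ∑ x : X, Nat.card (stabilizer G x) • f (Quotient.mk'' x)
      = ∑ ω, ∑ x : ω.orbit, Nat.card (stabilizer G (x : X)) • f ω :=
        (Fintype.sum_equiv (selfEquivSigmaOrbits' G X) _
          (fun p => Nat.card (stabilizer G (p.2 : X)) • f p.1) fun _ => rfl).trans
          (Fintype.sum_sigma _)
    _ = ∑ ω, Nat.card G • f ω := by
        simp_rw [← Finset.sum_smul, sum_card_stabilizer_orbit]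
    _ = Nat.card G • ∑ ω, f ω := Finset.smul_sum.symm

end MulAction

structure IsSignCocycle {G X : Type*} [Group G] [MulAction G X] (ε : G → X → ℤ) : Prop where
  eq_one_or_eq_neg_one : ∀ g x, ε g x = 1 ∨ ε g x = -1
  map_mul : ∀ g h x, ε (g * h) x = ε g (h • x) * ε h x

def IsEvenAt {G X : Type*} [SMul G X] (ε : G → X → ℤ) (x : X) : Prop :=
  ∀ g : G, g • x = x → ε g x = 1

namespace IsSignCocycle

variable {G X : Type*} [Group G] [MulAction G X] {ε : G → X → ℤ} (hε : IsSignCocycle ε)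
include hε

theorem ne_zero (g : G) (x : X) : ε g x ≠ 0 := by
  rcases hε.eq_one_or_eq_neg_one g x with h | h <;> simp [h]

theorem map_one (x : X) : ε 1 x = 1 := by
  have h := hε.map_mul 1 1 x
  rw [one_mul, one_smul] at h
  exact (mul_eq_left₀ (hε.ne_zero 1 x)).1 h.symm

theorem map_mul_of_smul_eq {g h : G} {x : X} (hh : h • x = x) :
    ε (g * h) x = ε g x * ε h x := by
  rw [hε.map_mul, hh]

/-- Because `ε h x` is a unit, it cancels from the two expansions of `ε (h * k) x`. -/
theorem map_conj {h k : G} {x : X} (hk : k • x = x) : ε (h * k * h⁻¹) (h • x) = ε k x := by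
  have hhk := hε.map_mul (h * k * h⁻¹) h x
  rw [inv_mul_cancel_right, hε.map_mul_of_smul_eq hk, mul_comm (ε h x)] at hhk
  exact mul_right_cancel₀ (hε.ne_zero h x) hhk.symm

def stabilizerHom (x : X) : stabilizer G x →* ℤ where
  toFun g := ε g x
  map_one' := hε.map_one x
  map_mul' _ h := hε.map_mul_of_smul_eq h.2

theorem isEvenAt_smul_of_isEvenAt {x : X} (hx : IsEvenAt ε x) (h : G) : IsEvenAt ε (h • x) := by
  intro g hg
  have hfix : (h⁻¹ * g * h) • x = x := by rw [mul_smul, mul_smul, hg, inv_smul_smul]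
  have hg' : g = h * (h⁻¹ * g * h) * h⁻¹ := by group
  rw [hg', hε.map_conj hfix]
  exact hx _ hfix

theorem isEvenAt_smul_iff (h : G) (x : X) : IsEvenAt ε (h • x) ↔ IsEvenAt ε x :=
  ⟨fun hx => inv_smul_smul h x ▸ hε.isEvenAt_smul_of_isEvenAt hx h⁻¹,
    fun hx => hε.isEvenAt_smul_of_isEvenAt hx h⟩

theorem stabilizerHom_eq_one_iff (x : X) : hε.stabilizerHom x = 1 ↔ IsEvenAt ε x := by
  simp [DFunLike.ext_iff, IsEvenAt, stabilizerHom, mem_stabilizer_iff]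

theorem forall_mem_orbit_isEvenAt_iff (x : X) :
    (∀ y ∈ orbit G x, IsEvenAt ε y) ↔ IsEvenAt ε x :=
  ⟨fun h => h x (mem_orbit_self x), by
    rintro hx _ ⟨g, rfl⟩
    exact (hε.isEvenAt_smul_iff g x).2 hx⟩

theorem sum_if_smul_eq_self [Fintype G] [DecidableEq X] [DecidablePred (IsEvenAt ε)] (x : X) :
    ∑ g : G, (if g • x = x then ε g x else 0) =
      if IsEvenAt ε x then (Nat.card (stabilizer G x) : ℤ) else 0 := by
  classical
  calc ∑ g : G, (if g • x = x then ε g x else 0)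
      = ∑ g : stabilizer G x, hε.stabilizerHom x g := by
        rw [← Finset.sum_filter]
        exact Finset.sum_subtype _ (fun g => by simp [mem_stabilizer_iff]) _
    _ = ((if hε.stabilizerHom x = 1 then Fintype.card (stabilizer G x) else 0 : ℕ) : ℤ) :=
        sum_hom_units _
    _ = if IsEvenAt ε x then (Nat.card (stabilizer G x) : ℤ) else 0 := by
        simp only [hε.stabilizerHom_eq_one_iff, Nat.card_eq_fintype_card, Nat.cast_ite,
          Nat.cast_zero]

end IsSignCocycle

/-- Let `G` be a finite group acting on a finite set `X`, and let
`ε : G × X → {1, -1} ⊆ ℤ` satisfy the cocycle condition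
`ε (g * h) x = ε g (h • x) * ε h x`.  An orbit `O` is even if `ε g x = 1` for every
`x ∈ O` and every `g` fixing `x`.  Then the number of even orbits times `|G|` equals
`∑_{g ∈ G} ∑_{x ∈ X, g • x = x} ε g x` in `ℤ`. -/
theorem stmt_2 {G X : Type*} [Group G] [Fintype G] [Fintype X] [DecidableEq X]
    [MulAction G X]
    (ε : G → X → ℤ) (hval : ∀ g x, ε g x = 1 ∨ ε g x = -1)
    (hcoc : ∀ g h x, ε (g * h) x = ε g (h • x) * ε h x) :
    (Nat.card {O : MulAction.orbitRel.Quotient G X //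
        ∀ x ∈ O.orbit, ∀ g : G, g • x = x → ε g x = 1} : ℤ) * Fintype.card G =
      ∑ g : G, ∑ x : X, if g • x = x then ε g x else 0 := by
  classical
  have hε : IsSignCocycle ε := ⟨hval, hcoc⟩
  show (Nat.card {O : orbitRel.Quotient G X // ∀ x ∈ O.orbit, IsEvenAt ε x} : ℤ) * _ = _
  calc _ = Nat.card G • ∑ O : orbitRel.Quotient G X,
          if ∀ x ∈ O.orbit, IsEvenAt ε x then (1 : ℤ) else 0 := by
        rw [Finset.sum_boole, nsmul_eq_mul, Nat.card_eq_fintype_card, Fintype.card_subtype,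
          Nat.card_eq_fintype_card, mul_comm]
    _ = ∑ x : X, if IsEvenAt ε x then (Nat.card (stabilizer G x) : ℤ) else 0 := by
        rw [← sum_card_stabilizer_smul]
        simp only [orbitRel.Quotient.orbit_mk, hε.forall_mem_orbit_isEvenAt_iff, smul_ite,
          nsmul_one, smul_zero]
    _ = ∑ x : X, ∑ g : G, if g • x = x then ε g x else 0 := by
        simp only [hε.sum_if_smul_eq_self]
    _ = ∑ g : G, ∑ x : X, if g • x = x then ε g x else 0 := Finset.sum_comm
end

section
/- Let ρ be the ℚ-linear representation of G on the free ℚ-vector space with basis (e_x)_{x ∈ X} determined by ρ(g)(e_x) = ε(g,x)·e_{g·x} (this is a representation precisely because of the cocycle condition). Then the dimension of the subspace of G-invariant vectors equals the number of even orbits of G on X. -/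
/-- Let `G` be a finite group acting on a finite set `X`, and let
`ε : G × X → {1, -1} ⊆ ℤ` satisfy the cocycle condition
`ε (g * h) x = ε g (h • x) * ε h x`.  Let `ρ` be the `ℚ`-linear representation of `G` on
the free `ℚ`-vector space with basis `(e_x)_{x ∈ X}` determined by
`ρ g (e_x) = ε g x • e_{g • x}` (it is a representation because of the cocycle condition).
Then the dimension of the subspace of `G`-invariant vectors equals the number of even
orbits of `G` on `X`. -/
theorem stmt_3 {G X : Type*} [Group G] [Fintype G] [Fintype X] [DecidableEq X]
    [MulAction G X]
    (ε : G → X → ℤ) (hval : ∀ g x, ε g x = 1 ∨ ε g x = -1)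
    (hcoc : ∀ g h x, ε (g * h) x = ε g (h • x) * ε h x)
    (ρ : Representation ℚ G (X → ℚ))
    (hρ : ∀ (g : G) (x : X), ρ g (Pi.single x 1 : X → ℚ) = (ε g x : ℚ) • (Pi.single (g • x) 1 : X → ℚ)) :
    Module.finrank ℚ ρ.invariants =
      Nat.card {O : MulAction.orbitRel.Quotient G X //
        ∀ x ∈ O.orbit, ∀ g : G, g • x = x → ε g x = 1} := by
  classical
  set Q := MulAction.orbitRel.Quotient G X with hQ
  set P : Q → Prop := fun O => ∀ x ∈ O.orbit, ∀ g : G, g • x = x → ε g x = 1 with hP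
  -- ε 1 x = 1
  have hone : ∀ x : X, ε 1 x = 1 := by
    intro x
    have h := hcoc 1 1 x
    rw [one_mul, one_smul] at h
    rcases hval 1 x with h1 | h1
    · exact h1
    · rw [h1] at h; norm_num at h
  -- key evaluation formula
  have key : ∀ (f : X → ℚ) (g : G) (x : X), (ρ g f) (g • x) = (ε g x : ℚ) * f x := by
    intro f g x
    have hf' : f = ∑ y : X, f y • (Pi.single y 1 : X → ℚ) := by
      funext z
      simp [Finset.sum_apply, Pi.single_apply]
    calc (ρ g f) (g • x) = (ρ g (∑ y : X, f y • (Pi.single y 1 : X → ℚ))) (g • x) := by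
          rw [← hf']
      _ = (∑ y : X, f y • ((ε g y : ℚ) • (Pi.single (g • y) 1 : X → ℚ))) (g • x) := by
          rw [map_sum]
          simp_rw [map_smul, hρ]
      _ = ∑ y : X, f y * ((ε g y : ℚ) * (if g • x = g • y then 1 else 0)) := by
          simp [Finset.sum_apply, Pi.single_apply]
      _ = (ε g x : ℚ) * f x := by
          rw [Finset.sum_eq_single x]
          · simp [mul_comm]
          · intro b _ hb
            simp [smul_left_cancel_iff, Ne.symm hb, hb]
          · simp
  -- invariance characterization
  have mem_iff : ∀ f : X → ℚ, f ∈ ρ.invariants ↔ ∀ (g : G) (x : X),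
      f (g • x) = (ε g x : ℚ) * f x := by
    intro f
    rw [Representation.mem_invariants]
    constructor
    · intro hf g x
      have h := congrFun (hf g) (g • x)
      rw [key f g x] at h
      exact h.symm
    · intro h g
      funext y
      have h1 := key f g (g⁻¹ • y)
      rw [smul_inv_smul] at h1
      rw [h1, ← h g (g⁻¹ • y), smul_inv_smul]
  -- representatives
  have hsig : ∀ x : X, ∃ g : G, g • (Quotient.mk'' x : Q).out = x := by
    intro x
    have h : (Quotient.mk'' ((Quotient.mk'' x : Q).out) : Q) = Quotient.mk'' x :=
      Quotient.out_eq' _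
    rw [Quotient.eq''] at h
    obtain ⟨g, hg⟩ := h
    exact ⟨g⁻¹, by rw [← hg, inv_smul_smul]⟩
  choose σ hσ using hsig
  -- well-definedness of the sign on even orbits
  have eps_congr : ∀ x : X, P (Quotient.mk'' x) → ∀ g h : G, g • x = h • x →
      ε g x = ε h x := by
    intro x hx g h hgh
    have hk : (g⁻¹ * h) • x = x := by
      rw [mul_smul, ← hgh, inv_smul_smul]
    have h1 : ε (g⁻¹ * h) x = 1 :=
      hx x (MulAction.orbitRel.Quotient.mem_orbit.2 rfl) _ hk
    have h2 := hcoc g (g⁻¹ * h) x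
    rw [mul_inv_cancel_left, hk, h1, mul_one] at h2
    exact h2.symm
  -- the comparison linear map
  let Ψ : ρ.invariants →ₗ[ℚ] ({O : Q // P O} → ℚ) :=
    { toFun := fun f O => (f : X → ℚ) O.1.out
      map_add' := fun f g => rfl
      map_smul' := fun c f => rfl }
  have hinj : Function.Injective Ψ := by
    rw [injective_iff_map_eq_zero]
    intro f hf
    ext x
    show (f : X → ℚ) x = 0
    by_cases hPx : P (Quotient.mk'' x)
    · have h0 : (f : X → ℚ) ((Quotient.mk'' x : Q).out) = 0 := congrFun hf ⟨_, hPx⟩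
      have h1 := (mem_iff f).1 f.2 (σ x) ((Quotient.mk'' x : Q).out)
      rw [hσ x] at h1
      rw [h1, h0, mul_zero]
    · simp only [hP] at hPx
      push_neg at hPx
      obtain ⟨y, hy, g, hgy, hne⟩ := hPx
      have hyv : ε g y = -1 := (hval g y).resolve_left hne
      have h1 := (mem_iff f).1 f.2 g y
      rw [hgy, hyv] at h1
      have hy0 : (f : X → ℚ) y = 0 := by push_cast at h1; linarith
      rw [MulAction.orbitRel.Quotient.mem_orbit, Quotient.eq''] at hy
      obtain ⟨h, hh⟩ := hy
      have h2 := (mem_iff f).1 f.2 h⁻¹ y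
      rw [hy0, mul_zero] at h2
      rw [← hh, inv_smul_smul] at h2
      exact h2
  have hsurj : Function.Surjective Ψ := by
    intro c
    set F : X → ℚ := fun x =>
      if hPx : P (Quotient.mk'' x) then
        (ε (σ x) ((Quotient.mk'' x : Q).out) : ℚ) * c ⟨Quotient.mk'' x, hPx⟩
      else 0 with hF
    have hmk : ∀ (g : G) (x : X), (Quotient.mk'' (g • x) : Q) = Quotient.mk'' x := by
      intro g x
      exact Quotient.sound' (MulAction.orbitRel_apply.2 ⟨g, rfl⟩)
    have hFinv : F ∈ ρ.invariants := by
      rw [mem_iff]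
      intro g x
      show (if hPx : P (Quotient.mk'' (g • x)) then
          (ε (σ (g • x)) ((Quotient.mk'' (g • x) : Q).out) : ℚ) *
            c ⟨Quotient.mk'' (g • x), hPx⟩ else 0) = (ε g x : ℚ) * F x
      simp only [hmk g x]
      by_cases hPx : P (Quotient.mk'' x)
      · rw [dif_pos hPx]
        have hFx : F x = (ε (σ x) ((Quotient.mk'' x : Q).out) : ℚ) *
            c ⟨Quotient.mk'' x, hPx⟩ := by
          rw [hF]; simp only [dif_pos hPx]
        rw [hFx]
        have hPout : P (Quotient.mk'' ((Quotient.mk'' x : Q).out)) := by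
          rwa [Quotient.out_eq']
        have h1 : σ (g • x) • (Quotient.mk'' x : Q).out = (g * σ x) • (Quotient.mk'' x : Q).out := by
          rw [mul_smul, hσ x]
          have := hσ (g • x)
          rwa [hmk g x] at this
        have h2 := eps_congr _ hPout _ _ h1
        have h3 := hcoc g (σ x) ((Quotient.mk'' x : Q).out)
        rw [hσ x] at h3
        rw [h2, h3]
        push_cast
        ring
      · rw [dif_neg hPx]
        have hFx : F x = 0 := by rw [hF]; simp only [dif_neg hPx]
        rw [hFx, mul_zero]
    refine ⟨⟨F, hFinv⟩, ?_⟩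
    funext O
    obtain ⟨q, hq⟩ := O
    show F q.out = c ⟨q, hq⟩
    have e : (Quotient.mk'' q.out : Q) = q := Quotient.out_eq' q
    have e2 : (Quotient.mk'' q.out : Q).out = q.out := by rw [e]
    have hPq : P (Quotient.mk'' q.out) := by rwa [e]
    rw [hF]
    simp only [dif_pos hPq]
    have hstab : σ q.out • q.out = q.out := by
      have := hσ q.out
      rwa [e2] at this
    have h1 : ε (σ q.out) q.out = 1 :=
      hq q.out (MulAction.orbitRel.Quotient.mem_orbit.2 e) _ hstab
    rw [e2, h1]
    have h2 : c ⟨Quotient.mk'' q.out, hPq⟩ = c ⟨q, hq⟩ := congrArg c (Subtype.ext e)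
    rw [h2]
    norm_num
  have equiv := LinearEquiv.ofBijective Ψ ⟨hinj, hsurj⟩
  haveI : Fintype {O : Q // P O} := Fintype.ofFinite _
  rw [equiv.finrank_eq, Module.finrank_fintype_fun_eq_card, Nat.card_eq_fintype_card]
end

section
/- Let τ be a permutation of a finite set Y. Then in the polynomial ring ℤ[t]: Σ over all τ-invariant subsets E ⊆ Y of sgn(τ|_E)·t^{|E|} equals Π over orbits O of τ on Y of (1 − (−t)^{|O|}), where sgn(τ|_E) is the sign of the permutation of E obtained by restricting τ. -/
/-!
A `τ`-invariant set is a union of cycles of `τ`, so invariant sets `E` correspond to sets `S` of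
orbits. On the union of the orbits in `S`, `τ` restricts to a product of disjoint cycles of lengths
`|O|`, so `sgn(τ|_E) = ∏_{O ∈ S} -(-1)^|O|` and the term of `E` is `∏_{O ∈ S} -(-t)^|O|`.
Summing over all `S` expands the product `∏_O (1 - (-t)^|O|)`.
-/

open Finset Polynomial

namespace Equiv.Perm

variable {α : Type*} {f : Perm α}

theorem zpow_apply_mem_iff_of_forall_apply_mem_iff {s : Set α} (hs : ∀ x, f x ∈ s ↔ x ∈ s)
    (n : ℤ) : ∀ x, (f ^ n) x ∈ s ↔ x ∈ s := by
  induction n using Int.induction_on with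
  | zero => simp
  | succ n ih => intro x; rw [zpow_add_one, mul_apply, ih, hs]
  | pred n ih => intro x; rw [zpow_sub_one, mul_apply, ih, ← hs]; simp

theorem SameCycle.mem_iff_of_forall_apply_mem_iff {s : Set α} (hs : ∀ x, f x ∈ s ↔ x ∈ s)
    {x y : α} (h : f.SameCycle x y) : x ∈ s ↔ y ∈ s := by
  obtain ⟨n, rfl⟩ := h
  exact (zpow_apply_mem_iff_of_forall_apply_mem_iff hs n x).symm

theorem orbitRel_zpowers_iff_sameCycle (x y : α) :
    MulAction.orbitRel (Subgroup.zpowers f) α x y ↔ f.SameCycle y x := by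
  rw [MulAction.orbitRel_apply, MulAction.mem_orbit_iff, Subgroup.exists_zpowers]
  rfl

variable [DecidableEq α]

theorem sign_subtypePerm_of_isCycleOn {s : Finset α} (hf : f.IsCycleOn s) (hs : s.Nonempty) :
    sign (f.subtypePerm fun _ => hf.apply_mem_iff) = -(-1) ^ #s := by
  obtain hle | hlt := le_or_gt #s 1
  · have : Subsingleton s := card_le_one_iff_subsingleton_coe.mp hle
    rw [Subsingleton.elim (f.subtypePerm _) 1, sign_one, le_antisymm hle hs.card_pos]
    simp
  · have hmoved : (f.subtypePerm fun _ => hf.apply_mem_iff).support = univ := by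
      ext x
      simpa using hf.apply_ne (one_lt_card_iff_nontrivial.mp hlt) x.2
    rw [(hf.isCycle_subtypePerm (one_lt_card_iff_nontrivial.mp hlt)).sign, hmoved, card_univ]
    simp

theorem ofSubtype_subtypePerm_union {s t : Finset α} (hst : _root_.Disjoint s t)
    (hs : ∀ x, f x ∈ s ↔ x ∈ s) (ht : ∀ x, f x ∈ t ↔ x ∈ t)
    (hst' : ∀ x, f x ∈ s ∪ t ↔ x ∈ s ∪ t) :
    ofSubtype (f.subtypePerm hst') =
      ofSubtype (f.subtypePerm hs) * ofSubtype (f.subtypePerm ht) := by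
  ext x
  by_cases hxs : x ∈ s
  · have hxt : x ∉ t := disjoint_left.mp hst hxs
    simp [ofSubtype_subtypePerm_of_mem _ (mem_union_left t hxs),
      ofSubtype_subtypePerm_of_not_mem _ hxt, ofSubtype_subtypePerm_of_mem _ hxs]
  by_cases hxt : x ∈ t
  · have hfxs : f x ∉ s := fun h => disjoint_left.mp hst h ((ht x).mpr hxt)
    simp [ofSubtype_subtypePerm_of_mem _ (mem_union_right s hxt),
      ofSubtype_subtypePerm_of_mem _ hxt, ofSubtype_subtypePerm_of_not_mem _ hfxs]
  · have hxst : x ∉ s ∪ t := by simp [hxs, hxt]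
    simp [ofSubtype_subtypePerm_of_not_mem _ hxst, ofSubtype_subtypePerm_of_not_mem _ hxs,
      ofSubtype_subtypePerm_of_not_mem _ hxt]

theorem sign_subtypePerm_biUnion [Fintype α] {ι : Type*} [DecidableEq ι] {P : ι → Finset α}
    (hP : ∀ i x, f x ∈ P i ↔ x ∈ P i) {s : Finset ι} (hs : (s : Set ι).PairwiseDisjoint P)
    (hU : ∀ x, f x ∈ s.biUnion P ↔ x ∈ s.biUnion P) :
    sign (f.subtypePerm hU) = ∏ i ∈ s, sign (f.subtypePerm (hP i)) := by
  induction s using Finset.induction_on with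
  | empty =>
    revert hU
    rw [biUnion_empty]
    intro hU
    simp [Subsingleton.elim (f.subtypePerm hU) 1]
  | insert i s hi ih =>
    have hU' : ∀ x, f x ∈ s.biUnion P ↔ x ∈ s.biUnion P := by simp [hP]
    rw [coe_insert, Set.pairwiseDisjoint_insert] at hs
    have hdisj : _root_.Disjoint (P i) (s.biUnion P) :=
      (disjoint_biUnion_right _ _ _).mpr fun j hj => hs.2 j hj (ne_of_mem_of_not_mem hj hi).symm
    revert hU
    rw [biUnion_insert]
    intro hU
    rw [← sign_ofSubtype, ofSubtype_subtypePerm_union hdisj (hP i) hU', map_mul, sign_ofSubtype,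
      sign_ofSubtype, ih hs.1 hU', prod_insert hi]

section CycleQuotient

variable {Y Q : Type*} {τ : Perm Y} {π : Y → Q}

theorem apply_perm_apply_eq (hπ : ∀ x y, π x = π y ↔ τ.SameCycle x y) (x : Y) :
    π (τ x) = π x :=
  (hπ (τ x) x).mpr (sameCycle_apply_left.mpr SameCycle.rfl)

variable [Fintype Y] [DecidableEq Q]

theorem apply_mem_fiber_iff (hπ : ∀ x y, π x = π y ↔ τ.SameCycle x y)
    (q : Q) (x : Y) :
    τ x ∈ ({y | π y = q} : Finset Y) ↔ x ∈ ({y | π y = q} : Finset Y) := by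
  simp [apply_perm_apply_eq hπ]

theorem isCycleOn_fiber (hπ : ∀ x y, π x = π y ↔ τ.SameCycle x y) (q : Q) :
    τ.IsCycleOn ({y | π y = q} : Finset Y) :=
  ⟨τ.bijOn (apply_mem_fiber_iff hπ q), fun x hx y hy => (hπ x y).mp (by simp_all)⟩

variable [DecidableEq Y]

theorem sign_subtypePerm_fiber (hπ : ∀ x y, π x = π y ↔ τ.SameCycle x y) (x : Y) :
    sign (τ.subtypePerm (apply_mem_fiber_iff hπ (π x))) =
      -(-1) ^ #({y | π y = π x} : Finset Y) :=
  sign_subtypePerm_of_isCycleOn (isCycleOn_fiber hπ (π x)) ⟨x, by simp⟩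

theorem biUnion_fiber_image_of_forall_apply_mem_iff
    (hπ : ∀ x y, π x = π y ↔ τ.SameCycle x y) {E : Finset Y}
    (hE : ∀ x, x ∈ E ↔ τ x ∈ E) :
    (E.image π).biUnion (fun q => ({y | π y = q} : Finset Y)) = E := by
  ext x
  simp only [mem_biUnion, mem_image, mem_filter, mem_univ, true_and]
  constructor
  · rintro ⟨_, ⟨y, hy, rfl⟩, hyx⟩
    exact ((hπ y x).mp hyx.symm).mem_iff_of_forall_apply_mem_iff (s := (E : Set Y))
      (fun z => (hE z).symm) |>.mp hy
  · exact fun hx => ⟨π x, ⟨x, hx, rfl⟩, rfl⟩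

def finsetEquivInvariantFinset (hπ : ∀ x y, π x = π y ↔ τ.SameCycle x y)
    (hπ' : Function.Surjective π) :
    Finset Q ≃ {E : Finset Y // ∀ x, x ∈ E ↔ τ x ∈ E} where
  toFun S := ⟨S.biUnion fun q => {y | π y = q}, fun x => by
    simp [apply_perm_apply_eq hπ]⟩
  invFun E := E.1.image π
  left_inv S := by
    ext q
    obtain ⟨x, rfl⟩ := hπ' q
    simpa using ⟨fun ⟨_, hy, hyx⟩ => hyx ▸ hy, fun hx => ⟨x, hx, rfl⟩⟩
  right_inv E := Subtype.ext (biUnion_fiber_image_of_forall_apply_mem_iff hπ E.2)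

theorem sign_smul_X_pow_biUnion_fiber (hπ : ∀ x y, π x = π y ↔ τ.SameCycle x y)
    (hπ' : Function.Surjective π) (S : Finset Q)
    (hS : ∀ x, τ x ∈ S.biUnion (fun q => ({y | π y = q} : Finset Y)) ↔
      x ∈ S.biUnion (fun q => ({y | π y = q} : Finset Y))) :
    (sign (τ.subtypePerm hS) : ℤ) • (X : ℤ[X]) ^
        #(S.biUnion fun q => ({y | π y = q} : Finset Y)) =
      ∏ q ∈ S, -(-X) ^ #({y | π y = q} : Finset Y) := by
  have hdisj : (S : Set Q).PairwiseDisjoint fun q => ({y | π y = q} : Finset Y) :=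
    fun q _ q' _ hqq' => disjoint_filter.mpr fun x _ hq hq' => hqq' (hq ▸ hq')
  have hsign : ∀ q ∈ S, (sign (τ.subtypePerm (apply_mem_fiber_iff hπ q)) : ℤ[X]) =
      -(-1) ^ #({y | π y = q} : Finset Y) := by
    intro q _
    obtain ⟨x, rfl⟩ := hπ' q
    simp [sign_subtypePerm_fiber hπ x]
  rw [sign_subtypePerm_biUnion (apply_mem_fiber_iff hπ) hdisj, card_biUnion hdisj, zsmul_eq_mul,
    Units.coe_prod, Int.cast_prod, prod_congr rfl hsign, ← prod_pow_eq_pow_sum,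
    ← prod_mul_distrib]
  refine prod_congr rfl fun q _ => ?_
  rw [neg_pow (X : ℤ[X])]
  ring

end CycleQuotient

end Equiv.Perm

/-- For a permutation `τ` of a finite set `Y`, in `ℤ[t]`, the sum over all
`τ`-invariant subsets `E ⊆ Y` of `sgn(τ|_E) · t^|E|` equals the product over the orbits `O`
of `τ` on `Y` of `(1 - (-t)^|O|)`. -/
theorem stmt_4 {Y : Type*} [Fintype Y] [DecidableEq Y] (τ : Equiv.Perm Y) :
    ∑ E : {E : Finset Y // ∀ x, x ∈ E ↔ τ x ∈ E},
      (Equiv.Perm.sign (τ.subtypePerm fun x => (E.2 x).symm) : ℤ) • (X : ℤ[X]) ^ (E : Finset Y).card =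
    ∏ᶠ O : MulAction.orbitRel.Quotient (Subgroup.zpowers τ) Y,
      (1 - (-(X : ℤ[X])) ^ Nat.card O.orbit) := by
  classical
  let Q := MulAction.orbitRel.Quotient (Subgroup.zpowers τ) Y
  have : Fintype Q := Fintype.ofFinite Q
  have hπ : ∀ x y, (Quotient.mk'' x : Q) = Quotient.mk'' y ↔ τ.SameCycle x y := fun x y => by
    rw [Quotient.eq'', Equiv.Perm.orbitRel_zpowers_iff_sameCycle, Equiv.Perm.sameCycle_comm]
  have hcard : ∀ O : Q, Nat.card O.orbit = #({y | Quotient.mk'' y = O} : Finset Y) := fun O => by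
    simp [Nat.card_eq_fintype_card, Fintype.card_subtype, MulAction.orbitRel.Quotient.mem_orbit]
  rw [← (Equiv.Perm.finsetEquivInvariantFinset hπ Quotient.mk''_surjective).sum_comp,
    finprod_eq_prod_of_fintype]
  simp_rw [hcard, sub_eq_add_neg, prod_one_add, powerset_univ]
  exact sum_congr rfl fun S _ =>
    Equiv.Perm.sign_smul_X_pow_biUnion_fiber hπ Quotient.mk''_surjective S _
end

section
/- For all natural numbers N and all k with 0 ≤ k ≤ N + 1, the following identity holds in ℚ: binom(2N, 2k)/(2N − 2k + 1) + binom(2N, 2N − 2k + 2)/(2k − 1) = binom(2N + 2, 2k)/(2N + 1), where the divisions are taken in ℚ (note 2k − 1 = −1 when k = 0, and binomial coefficients with lower index exceeding the upper index are 0). -/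
/-!
Both terms on the left are entries of row `2N + 1` divided by `2N + 1`:
`C(2N, 2k) / (2N - 2k + 1) = C(2N + 1, 2k) / (2N + 1)`, and, by symmetry
`C(2N, 2N + 2 - 2k) = C(2N, 2k - 2)`, `C(2N, 2k - 2) / (2k - 1) = C(2N + 1, 2k - 1) / (2N + 1)`.
Pascal's rule adds them up to `C(2N + 2, 2k) / (2N + 1)`. The case `k = 0`, where the oddTerm
denominator is `-1` and its numerator vanishes, is checked directly.
-/

section

variable {K : Type*} [Field K] [CharZero K]

/- The excluded `j = n + 1` is the one place where the left denominator is `0`; for `j > n + 1`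
both numerators vanish. -/
theorem Nat.cast_choose_div_sub_add_one {n j : ℕ} (h : j ≠ n + 1) :
    (n.choose j : K) / (n - j + 1) = ((n + 1).choose j : K) / (n + 1) := by
  rcases le_or_gt j n with hjn | hnj
  · have hden : (n : K) - j + 1 ≠ 0 := by
      rw [← Nat.cast_sub hjn]; exact_mod_cast Nat.succ_ne_zero (n - j)
    have key : (n.choose j : K) * (n + 1) = (n + 1).choose j * (n - j + 1) := by
      have := congrArg (Nat.cast : ℕ → K) (Nat.choose_mul_succ_eq n j)
      push_cast [Nat.cast_sub (show j ≤ n + 1 by omega)] at this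
      linear_combination this
    rw [div_eq_div_iff hden (Nat.cast_add_one_ne_zero n)]
    linear_combination key
  · rw [Nat.choose_eq_zero_of_lt hnj, Nat.choose_eq_zero_of_lt (by omega)]
    simp

theorem Nat.cast_choose_div_add_one (n j : ℕ) :
    (n.choose j : K) / (j + 1) = ((n + 1).choose (j + 1) : K) / (n + 1) := by
  rw [div_eq_div_iff (Nat.cast_add_one_ne_zero j) (Nat.cast_add_one_ne_zero n)]
  exact_mod_cast (mul_comm _ _).trans (Nat.add_one_mul_choose_eq n j)

end

/-- For all natural numbers `N` and all `k ≤ N + 1`, in `ℚ`: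
`C(2N, 2k)/(2N - 2k + 1) + C(2N, 2N - 2k + 2)/(2k - 1) = C(2N + 2, 2k)/(2N + 1)`,
the divisions being taken in `ℚ` (so `2k - 1 = -1` when `k = 0`). -/
theorem stmt_11 (N k : ℕ) (hk : k ≤ N + 1) :
    (Nat.choose (2 * N) (2 * k) : ℚ) / (2 * (N : ℚ) - 2 * k + 1) +
      (Nat.choose (2 * N) (2 * N + 2 - 2 * k) : ℚ) / (2 * (k : ℚ) - 1) =
    (Nat.choose (2 * N + 2) (2 * k) : ℚ) / (2 * (N : ℚ) + 1) := by
  rcases k with _ | i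
  · simp [Nat.choose_eq_zero_of_lt]
  have evenTerm :=
    Nat.cast_choose_div_sub_add_one (K := ℚ) (n := 2 * N) (j := 2 * (i + 1)) (by omega)
  have oddTerm := Nat.cast_choose_div_add_one (K := ℚ) (2 * N) (2 * i)
  rw [show 2 * N + 2 - 2 * (i + 1) = 2 * N - 2 * i by omega, Nat.choose_symm (by omega)]
  push_cast at evenTerm oddTerm ⊢
  rw [evenTerm, show 2 * ((i : ℚ) + 1) - 1 = 2 * i + 1 by ring, oddTerm, ← add_div,
    show 2 * (i + 1) = 2 * i + 1 + 1 by ring, Nat.choose_succ_succ' (2 * N + 1)]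
  push_cast
  ring
end

section
/- For all natural numbers N ≥ 1 and all k with 0 ≤ k ≤ N, the following identity holds in ℚ: binom(2N − 1, 2k)/(2N − 2k + 1) + binom(2N − 1, 2N − 2k + 1)/(2k − 1) = binom(2N + 1, 2k)/(2N + 1), where the divisions are taken in ℚ (note 2k − 1 = −1 when k = 0, and binomial coefficients with lower index exceeding the upper index are 0). -/
/-- For all natural numbers `N ≥ 1` and all `k ≤ N`, in `ℚ`:
`C(2N - 1, 2k)/(2N - 2k + 1) + C(2N - 1, 2N - 2k + 1)/(2k - 1) = C(2N + 1, 2k)/(2N + 1)`,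
the divisions being taken in `ℚ` (so `2k - 1 = -1` when `k = 0`). -/
theorem stmt_12 (N k : ℕ) (hN : 1 ≤ N) (hk : k ≤ N) :
    (Nat.choose (2 * N - 1) (2 * k) : ℚ) / (2 * (N : ℚ) - 2 * k + 1) +
      (Nat.choose (2 * N - 1) (2 * N + 1 - 2 * k) : ℚ) / (2 * (k : ℚ) - 1) =
    (Nat.choose (2 * N + 1) (2 * k) : ℚ) / (2 * (N : ℚ) + 1) := by
  rcases k with _ | m
  · have h1 : 2 * N - 1 < 2 * N + 1 - 2 * 0 := by omega
    rw [Nat.choose_eq_zero_of_lt h1]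
    simp
  · obtain ⟨d, rfl⟩ : ∃ d, N = (m + 1) + d := ⟨N - (m+1), by omega⟩
    rcases d with _ | e
    · have e1 : 2 * (m + 1 + 0) - 1 = 2 * m + 1 := by omega
      have e2 : 2 * (m + 1 + 0) + 1 - 2 * (m + 1) = 1 := by omega
      have h1 : 2 * m + 1 < 2 * (m + 1) := by omega
      have e3 : 2 * (m + 1 + 0) + 1 = (2 * m + 2) + 1 := by omega
      have e4 : 2 * (m + 1) = 2 * m + 2 := by omega
      rw [e1, e2, Nat.choose_eq_zero_of_lt h1, Nat.choose_one_right, e3, e4,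
        Nat.choose_succ_self_right]
      have hm0 : (0:ℚ) ≤ (m:ℚ) := Nat.cast_nonneg m
      push_cast
      rw [zero_div, zero_add, div_eq_div_iff (by linarith) (by linarith)]
      ring
    · have e1 : 2 * (m + 1 + (e + 1)) - 1 = 2 * m + 2 * e + 3 := by omega
      have e2 : 2 * (m + 1 + (e + 1)) + 1 - 2 * (m + 1) = 2 * e + 3 := by omega
      have e3 : 2 * (m + 1 + (e + 1)) + 1 = 2 * m + 2 * e + 5 := by omega
      have e4 : 2 * (m + 1) = 2 * m + 2 := by omega
      rw [e1, e2, e3, e4]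
      rw [Nat.cast_choose ℚ (by omega : 2 * m + 2 ≤ 2 * m + 2 * e + 3),
          Nat.cast_choose ℚ (by omega : 2 * e + 3 ≤ 2 * m + 2 * e + 3),
          Nat.cast_choose ℚ (by omega : 2 * m + 2 ≤ 2 * m + 2 * e + 5)]
      have s1 : 2 * m + 2 * e + 3 - (2 * m + 2) = 2 * e + 1 := by omega
      have s2 : 2 * m + 2 * e + 3 - (2 * e + 3) = 2 * m := by omega
      have s3 : 2 * m + 2 * e + 5 - (2 * m + 2) = 2 * e + 3 := by omega
      rw [s1, s2, s3]
      have f1 : Nat.factorial (2 * m + 2 * e + 5)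
          = (2*m+2*e+5) * ((2*m+2*e+4) * Nat.factorial (2*m+2*e+3)) := by
        rw [show 2*m+2*e+5 = (2*m+2*e+4)+1 from rfl, Nat.factorial_succ,
            show 2*m+2*e+4 = (2*m+2*e+3)+1 from rfl, Nat.factorial_succ]
      have f2 : Nat.factorial (2 * m + 2)
          = (2*m+2) * ((2*m+1) * Nat.factorial (2*m)) := by
        rw [show 2*m+2 = (2*m+1)+1 from rfl, Nat.factorial_succ,
            show 2*m+1 = (2*m)+1 from rfl, Nat.factorial_succ]
      have f3 : Nat.factorial (2 * e + 3)
          = (2*e+3) * ((2*e+2) * Nat.factorial (2*e+1)) := by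
        rw [show 2*e+3 = (2*e+2)+1 from rfl, Nat.factorial_succ,
            show 2*e+2 = (2*e+1)+1 from rfl, Nat.factorial_succ]
      rw [f1, f2, f3]
      push_cast
      have h1 : ((Nat.factorial (2*m+2*e+3)) : ℚ) ≠ 0 := by positivity
      have h2 : ((Nat.factorial (2*m)) : ℚ) ≠ 0 := by positivity
      have h3 : ((Nat.factorial (2*e+1)) : ℚ) ≠ 0 := by positivity
      have hc1 : 2 * ((m:ℚ) + 1 + ((e:ℚ)+1)) - 2*((m:ℚ)+1) + 1 = 2*(e:ℚ)+3 := by ring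
      have hc2 : 2 * ((m:ℚ)+1) - 1 = 2*(m:ℚ)+1 := by ring
      have hc3 : 2 * ((m:ℚ) + 1 + ((e:ℚ)+1)) + 1 = 2*(m:ℚ)+2*(e:ℚ)+5 := by ring
      rw [hc1, hc2, hc3]
      have n1 : (2*(e:ℚ)+3) ≠ 0 := by positivity
      have n2 : (2*(m:ℚ)+1) ≠ 0 := by positivity
      have n3 : (2*(m:ℚ)+2*(e:ℚ)+5) ≠ 0 := by positivity
      field_simp
      ring
end
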